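/- Let k1, k2 ∈ ℝ with 0 < k1 < 2 and k2 > 0, let h1(x) = e^{(k1+k2)x}·(k2(2+k2)x² − 2(1+k2)x + 2) + k1(2−k1)x² + 2(1−k1)x − 2, and let T = (k1+k2)·(6k2(2+k2) − 6(k1+k2)(1+k2) + 2(k1+k2)²). Then: if T > 0, h1 has exactly one root in (−∞,0) and no root in (0,∞); if T < 0, h1 has exactly one root in (0,∞) and no root in (−∞,0); and if T = 0, then h1(x) ≠ 0 for all x ≠ 0. -/

import Mathlib

/-!
Put `a = k1 + k2`. Both `x ↦ exp (-a x) * h1 k1 k2 x` and `x ↦ h1 k1 k2 (-x)` have the form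
`u x = p x + exp (-a x) * q x` with quadratics `p`, `q` of positive leading coefficient, and
`u` vanishes to second order at `0`. The polynomial part dies in the third derivative, so
`u''' x = exp (-a x) * Q x` for a quadratic `Q` with negative leading coefficient, and
`Q 0 = u''' 0` is `T` for the first function and `-T` for the second.

On `(0, ∞)` the sign pattern of `Q` is integrated three times, using `u = u' = u'' = 0` at `0`
and that `u''`, `u'`, `u` are eventually positive. If `Q 0 ≥ 0`, then `Q` is positive and then
negative, and `u'' > 0`, hence `u' > 0` and `u > 0`. If `Q 0 < 0`, then `Q` (which must become
positive, as `u''` does) is negative, positive, negative, and each of `u''`, `u'`, `u` changes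
sign exactly once, from negative to positive.
-/

/-- The closing-condition function for U(2)-invariant gradient Kähler Ricci
solitons with orbifold singularities on the compact spaces `M_n`. -/
noncomputable def h1 (k1 k2 : ℝ) : ℝ → ℝ := fun x =>
  Real.exp ((k1 + k2) * x) * (k2 * (2 + k2) * x ^ 2 - 2 * (1 + k2) * x + 2)
    + k1 * (2 - k1) * x ^ 2 + 2 * (1 - k1) * x - 2

open Real Set Filter Topology

section Quadratic

variable {A B C : ℝ}

lemma exists_factorization_of_discrim_nonneg (hA : A < 0) (hd : 0 ≤ discrim A B C) :
    ∃ r₁ r₂, r₁ ≤ r₂ ∧ ∀ x, A * x ^ 2 + B * x + C = A * (x - r₁) * (x - r₂) := by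
  set d := √(discrim A B C)
  have hd0 : 0 ≤ d := sqrt_nonneg _
  have hd2 : d ^ 2 = B ^ 2 - 4 * A * C := by rw [sq_sqrt hd, discrim]
  refine ⟨(-B + d) / (2 * A), (-B - d) / (2 * A),
    div_le_div_of_nonpos_of_le (by linarith) (by linarith), fun x => ?_⟩
  field_simp [hA.ne]
  linear_combination hd2

lemma exists_pos_then_neg_of_quadratic (hA : A < 0) (hC : 0 ≤ C) :
    ∃ t, 0 ≤ t ∧ ∀ x, 0 < x →
      (x < t → 0 < A * x ^ 2 + B * x + C) ∧ (t < x → A * x ^ 2 + B * x + C < 0) := by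
  have hd : 0 ≤ discrim A B C := by
    rw [discrim]; nlinarith [sq_nonneg B, mul_nonpos_of_nonpos_of_nonneg hA.le hC]
  obtain ⟨r₁, r₂, hr, hq⟩ := exists_factorization_of_discrim_nonneg hA hd
  have hC' : C = A * r₁ * r₂ := by simpa using hq 0
  have hr₁ : r₁ ≤ 0 := by
    by_contra! h; nlinarith [mul_pos h (h.trans_le hr), mul_neg_of_neg_of_pos hA h]
  have hr₂ : 0 ≤ r₂ := by
    by_contra! h; nlinarith [mul_pos_of_neg_of_neg (hr.trans_lt h) h]
  refine ⟨r₂, hr₂, fun x hx => ⟨fun hxt => ?_, fun hxt => ?_⟩⟩ <;> rw [hq]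
  · nlinarith [mul_pos (mul_pos_of_neg_of_neg hA (sub_neg.2 hxt)) (sub_pos.2 (hr₁.trans_lt hx))]
  · nlinarith [mul_pos (sub_pos.2 hxt) (sub_pos.2 (hr₁.trans_lt hx))]

lemma exists_neg_pos_neg_of_quadratic (hA : A < 0) (hC : C < 0) {y : ℝ} (hy : 0 < y)
    (hqy : 0 < A * y ^ 2 + B * y + C) :
    ∃ s t, 0 < s ∧ s < t ∧ ∀ x, 0 < x →
      (x < s → A * x ^ 2 + B * x + C < 0) ∧ (s < x → x < t → 0 < A * x ^ 2 + B * x + C) ∧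
      (t < x → A * x ^ 2 + B * x + C < 0) := by
  have hd : 0 ≤ discrim A B C := by
    rw [discrim]; nlinarith [sq_nonneg (2 * A * y + B), mul_neg_of_neg_of_pos hA hqy]
  obtain ⟨r₁, r₂, hr, hq⟩ := exists_factorization_of_discrim_nonneg hA hd
  have hC' : C = A * r₁ * r₂ := by simpa using hq 0
  have hy₁ : r₁ < y := by
    by_contra! h
    rw [hq] at hqy
    nlinarith [mul_nonneg (sub_nonneg.2 h) (sub_nonneg.2 (h.trans hr))]
  have hy₂ : y < r₂ := by
    by_contra! h
    rw [hq] at hqy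
    nlinarith [mul_nonneg (sub_nonneg.2 h) (sub_nonneg.2 (hr.trans h))]
  have hr₁ : 0 < r₁ := by
    by_contra! h; nlinarith [mul_nonpos_of_nonpos_of_nonneg h (hy.trans hy₂).le]
  refine ⟨r₁, r₂, hr₁, hy₁.trans hy₂, fun x _ => ⟨fun h₁ => ?_, fun h₁ h₂ => ?_, fun h₂ => ?_⟩⟩ <;>
    rw [hq]
  · nlinarith [mul_pos_of_neg_of_neg (sub_neg.2 h₁) (sub_neg.2 (h₁.trans_le hr))]
  · nlinarith [mul_neg_of_pos_of_neg (sub_pos.2 h₁) (sub_neg.2 h₂)]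
  · nlinarith [mul_pos (sub_pos.2 (hr.trans_lt h₂)) (sub_pos.2 h₂)]

end Quadratic

def CrossesUpAt (f : ℝ → ℝ) (z : ℝ) : Prop :=
  ∀ x, 0 < x → (x < z → f x < 0) ∧ (z < x → 0 < f x)

lemma CrossesUpAt.existsUnique {f : ℝ → ℝ} {z : ℝ} (hf : CrossesUpAt f z) (hz : 0 < z)
    (hfz : f z = 0) : ∃! x, 0 < x ∧ f x = 0 := by
  refine ⟨z, ⟨hz, hfz⟩, fun x ⟨hx, hfx⟩ => ?_⟩
  by_contra hne
  rcases lt_or_gt_of_ne hne with h | h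
  · exact ((hf x hx).1 h).ne hfx
  · exact ((hf x hx).2 h).ne' hfx

section SignPattern

variable {g g' : ℝ → ℝ} {s t : ℝ}

lemma strictMonoOn_of_hasDerivAt_pos {D : Set ℝ} (hD : Convex ℝ D)
    (hg : ∀ x, HasDerivAt g (g' x) x) (hpos : ∀ x ∈ interior D, 0 < g' x) :
    StrictMonoOn g D :=
  strictMonoOn_of_hasDerivWithinAt_pos hD (fun x _ => (hg x).continuousAt.continuousWithinAt)
    (fun x _ => (hg x).hasDerivWithinAt) hpos

lemma strictAntiOn_of_hasDerivAt_neg {D : Set ℝ} (hD : Convex ℝ D)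
    (hg : ∀ x, HasDerivAt g (g' x) x) (hneg : ∀ x ∈ interior D, g' x < 0) :
    StrictAntiOn g D :=
  strictAntiOn_of_hasDerivWithinAt_neg hD (fun x _ => (hg x).continuousAt.continuousWithinAt)
    (fun x _ => (hg x).hasDerivWithinAt) hneg

lemma pos_of_strictAntiOn_Ici (hanti : StrictAntiOn g (Ici t))
    (hev : ∀ᶠ x in atTop, 0 < g x) {x : ℝ} (hx : t ≤ x) : 0 < g x := by
  obtain ⟨y, hy, hxy⟩ := (hev.and (eventually_gt_atTop x)).exists
  exact hy.trans (hanti hx (hx.trans hxy.le) hxy)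

lemma exists_pos_deriv_pos (hg : ∀ x, HasDerivAt g (g' x) x) (hg0 : g 0 = 0)
    (hev : ∀ᶠ x in atTop, 0 < g x) : ∃ y, 0 < y ∧ 0 < g' y := by
  obtain ⟨x, hgx, hx⟩ := (hev.and (eventually_gt_atTop 0)).exists
  obtain ⟨y, hy, hslope⟩ := exists_hasDerivAt_eq_slope g g' hx
    (fun y _ => (hg y).continuousAt.continuousWithinAt) (fun y _ => hg y)
  rw [hg0, sub_zero, sub_zero] at hslope
  exact ⟨y, hy.1, hslope ▸ div_pos hgx hx⟩

lemma pos_of_deriv_pos (hg : ∀ x, HasDerivAt g (g' x) x) (hg0 : g 0 = 0)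
    (hpos : ∀ x, 0 < x → 0 < g' x) {x : ℝ} (hx : 0 < x) : 0 < g x := by
  have hmono := strictMonoOn_of_hasDerivAt_pos (convex_Ici 0) hg
    fun y hy => hpos y (by rwa [interior_Ici] at hy)
  simpa only [hg0] using hmono self_mem_Ici hx.le hx

lemma pos_of_deriv_pos_then_neg (hg : ∀ x, HasDerivAt g (g' x) x) (hg0 : g 0 = 0)
    (hev : ∀ᶠ x in atTop, 0 < g x) (ht : 0 ≤ t)
    (hsign : ∀ x, 0 < x → (x < t → 0 < g' x) ∧ (t < x → g' x < 0))
    {x : ℝ} (hx : 0 < x) : 0 < g x := by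
  have hanti : StrictAntiOn g (Ici t) := strictAntiOn_of_hasDerivAt_neg (convex_Ici t) hg
    fun y hy => by rw [interior_Ici] at hy; exact (hsign y (ht.trans_lt hy)).2 hy
  rcases le_or_gt x t with hxt | hxt
  · have hmono : StrictMonoOn g (Icc 0 t) := strictMonoOn_of_hasDerivAt_pos (convex_Icc 0 t) hg
      fun y hy => by rw [interior_Icc] at hy; exact (hsign y hy.1).1 hy.2
    simpa only [hg0] using hmono (left_mem_Icc.2 ht) ⟨hx.le, hxt⟩ hx
  · exact pos_of_strictAntiOn_Ici hanti hev hxt.le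

lemma exists_crossing_of_strictAntiOn_of_strictMonoOn (hs : 0 < s) (hst : s < t)
    (hcont : ContinuousOn g (Icc s t)) (hg0 : g 0 = 0) (hanti : StrictAntiOn g (Icc 0 s))
    (hmono : StrictMonoOn g (Icc s t)) (hgt : 0 < g t) :
    ∃ m ∈ Ioo s t, g m = 0 ∧ ∀ x, 0 < x → x < m → g x < 0 := by
  have hgs : g s < 0 := by
    simpa only [hg0] using hanti (left_mem_Icc.2 hs.le) (right_mem_Icc.2 hs.le) hs
  obtain ⟨m, hm, hgm⟩ := intermediate_value_Ioo hst.le hcont ⟨hgs, hgt⟩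
  refine ⟨m, hm, hgm, fun x hx hxm => ?_⟩
  rcases le_or_gt x s with hxs | hxs
  · simpa only [hg0] using hanti (left_mem_Icc.2 hs.le) ⟨hx.le, hxs⟩ hx
  · simpa only [hgm] using hmono ⟨hxs.le, hxm.le.trans hm.2.le⟩ ⟨hm.1.le, hm.2.le⟩ hxm

lemma exists_crossesUpAt_of_deriv (hg : ∀ x, HasDerivAt g (g' x) x) (hg0 : g 0 = 0)
    (hev : ∀ᶠ x in atTop, 0 < g x) (hs : 0 < s) (hcross : CrossesUpAt g' s) :
    ∃ z, s < z ∧ g z = 0 ∧ CrossesUpAt g z := by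
  have hanti : StrictAntiOn g (Icc 0 s) := strictAntiOn_of_hasDerivAt_neg (convex_Icc 0 s) hg
    fun y hy => by rw [interior_Icc] at hy; exact (hcross y hy.1).1 hy.2
  have hmono : StrictMonoOn g (Ici s) := strictMonoOn_of_hasDerivAt_pos (convex_Ici s) hg
    fun y hy => by rw [interior_Ici] at hy; exact (hcross y (hs.trans hy)).2 hy
  obtain ⟨T, hgT, hsT⟩ := (hev.and (eventually_gt_atTop s)).exists
  obtain ⟨z, hz, hgz, hneg⟩ := exists_crossing_of_strictAntiOn_of_strictMonoOn hs hsT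
    (fun y _ => (hg y).continuousAt.continuousWithinAt) hg0 hanti
    (hmono.mono Icc_subset_Ici_self) hgT
  refine ⟨z, hz.1, hgz, fun x hx => ⟨hneg x hx, fun hzx => ?_⟩⟩
  simpa only [hgz] using hmono hz.1.le (hz.1.le.trans hzx.le) hzx

lemma exists_crossesUpAt_of_deriv_neg_pos_neg (hg : ∀ x, HasDerivAt g (g' x) x)
    (hg0 : g 0 = 0) (hev : ∀ᶠ x in atTop, 0 < g x) (hs : 0 < s) (hst : s < t)
    (hsign : ∀ x, 0 < x →
      (x < s → g' x < 0) ∧ (s < x → x < t → 0 < g' x) ∧ (t < x → g' x < 0)) :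
    ∃ m, s < m ∧ CrossesUpAt g m := by
  have hanti₁ : StrictAntiOn g (Icc 0 s) := strictAntiOn_of_hasDerivAt_neg (convex_Icc 0 s) hg
    fun y hy => by rw [interior_Icc] at hy; exact (hsign y hy.1).1 hy.2
  have hmono : StrictMonoOn g (Icc s t) := strictMonoOn_of_hasDerivAt_pos (convex_Icc s t) hg
    fun y hy => by rw [interior_Icc] at hy; exact (hsign y (hs.trans hy.1)).2.1 hy.1 hy.2
  have hanti₂ : StrictAntiOn g (Ici t) := strictAntiOn_of_hasDerivAt_neg (convex_Ici t) hg
    fun y hy => by rw [interior_Ici] at hy; exact (hsign y ((hs.trans hst).trans hy)).2.2 hy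
  have hpos_tail : ∀ x, t ≤ x → 0 < g x := fun x => pos_of_strictAntiOn_Ici hanti₂ hev
  obtain ⟨m, hm, hgm, hneg⟩ := exists_crossing_of_strictAntiOn_of_strictMonoOn hs hst
    (fun y _ => (hg y).continuousAt.continuousWithinAt) hg0 hanti₁ hmono (hpos_tail t le_rfl)
  refine ⟨m, hm.1, fun x hx => ⟨hneg x hx, fun hmx => ?_⟩⟩
  rcases le_or_gt x t with hxt | hxt
  · simpa only [hgm] using hmono ⟨hm.1.le, hm.2.le⟩ ⟨hm.1.le.trans hmx.le, hxt⟩ hmx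
  · exact hpos_tail x hxt.le

end SignPattern

section ThirdDerivative

variable {u u' u'' e : ℝ → ℝ} {A B C : ℝ}

lemma pos_of_third_deriv (hu : ∀ x, HasDerivAt u (u' x) x) (hu' : ∀ x, HasDerivAt u' (u'' x) x)
    (hu'' : ∀ x, HasDerivAt u'' (e x * (A * x ^ 2 + B * x + C)) x) (he : ∀ x, 0 < e x)
    (h0 : u 0 = 0) (h0' : u' 0 = 0) (h0'' : u'' 0 = 0) (hev'' : ∀ᶠ x in atTop, 0 < u'' x)
    (hA : A < 0) (hC : 0 ≤ C) {x : ℝ} (hx : 0 < x) : 0 < u x := by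
  obtain ⟨t, ht, hq⟩ := exists_pos_then_neg_of_quadratic (B := B) hA hC
  have hu''_pos : ∀ y, 0 < y → 0 < u'' y := fun y hy =>
    pos_of_deriv_pos_then_neg hu'' h0'' hev'' ht
      (fun z hz => ⟨fun h => mul_pos (he z) ((hq z hz).1 h),
        fun h => mul_neg_of_pos_of_neg (he z) ((hq z hz).2 h)⟩) hy
  exact pos_of_deriv_pos hu h0 (fun y hy => pos_of_deriv_pos hu' h0' hu''_pos hy) hx

lemma exists_crossesUpAt_of_third_deriv (hu : ∀ x, HasDerivAt u (u' x) x)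
    (hu' : ∀ x, HasDerivAt u' (u'' x) x)
    (hu'' : ∀ x, HasDerivAt u'' (e x * (A * x ^ 2 + B * x + C)) x) (he : ∀ x, 0 < e x)
    (h0 : u 0 = 0) (h0' : u' 0 = 0) (h0'' : u'' 0 = 0) (hev : ∀ᶠ x in atTop, 0 < u x)
    (hev' : ∀ᶠ x in atTop, 0 < u' x) (hev'' : ∀ᶠ x in atTop, 0 < u'' x)
    (hA : A < 0) (hC : C < 0) : ∃ z, 0 < z ∧ u z = 0 ∧ CrossesUpAt u z := by
  obtain ⟨y, hy, hu'''y⟩ := exists_pos_deriv_pos hu'' h0'' hev''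
  obtain ⟨s, t, hs, hst, hq⟩ :=
    exists_neg_pos_neg_of_quadratic hA hC hy (pos_of_mul_pos_right hu'''y (he y).le)
  obtain ⟨m, hsm, hm⟩ := exists_crossesUpAt_of_deriv_neg_pos_neg hu'' h0'' hev'' hs hst
    fun x hx => ⟨fun h => mul_neg_of_pos_of_neg (he x) ((hq x hx).1 h),
      fun h₁ h₂ => mul_pos (he x) ((hq x hx).2.1 h₁ h₂),
      fun h => mul_neg_of_pos_of_neg (he x) ((hq x hx).2.2 h)⟩
  obtain ⟨p, hmp, -, hp⟩ := exists_crossesUpAt_of_deriv hu' h0' hev' (hs.trans hsm) hm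
  obtain ⟨z, hpz, hz, hcross⟩ := exists_crossesUpAt_of_deriv hu h0 hev (hs.trans (hsm.trans hmp)) hp
  exact ⟨z, hs.trans (hsm.trans (hmp.trans hpz)), hz, hcross⟩

end ThirdDerivative

noncomputable def expQuad (a α β γ δ ε ζ : ℝ) (x : ℝ) : ℝ :=
  α * x ^ 2 + β * x + γ + exp (-a * x) * (δ * x ^ 2 + ε * x + ζ)

section ExpQuad

variable {a α β γ δ ε ζ : ℝ}

lemma hasDerivAt_expQuad (a α β γ δ ε ζ x : ℝ) :
    HasDerivAt (expQuad a α β γ δ ε ζ)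
      (expQuad a 0 (2 * α) β (-a * δ) (2 * δ - a * ε) (ε - a * ζ) x) x := by
  have hexp : HasDerivAt (fun x => exp (-a * x)) (exp (-a * x) * -a) x := by
    simpa using ((hasDerivAt_id x).const_mul (-a)).exp
  have hpoly (p q r : ℝ) : HasDerivAt (fun x => p * x ^ 2 + q * x + r) (2 * p * x + q) x := by
    simpa [mul_comm, mul_left_comm] using
      (((hasDerivAt_pow 2 x).const_mul p).add ((hasDerivAt_id x).const_mul q)).add_const r
  exact ((hpoly α β γ).add (hexp.mul (hpoly δ ε ζ))).congr_deriv (by simp only [expQuad]; ring)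

lemma tendsto_exp_neg_mul_mul_quadratic (ha : 0 < a) (δ ε ζ : ℝ) :
    Tendsto (fun x => exp (-a * x) * (δ * x ^ 2 + ε * x + ζ)) atTop (𝓝 0) := by
  have hpow (n : ℕ) : Tendsto (fun x : ℝ => x ^ n * exp (-a * x)) atTop (𝓝 0) := by
    simpa [rpow_natCast] using tendsto_rpow_mul_exp_neg_mul_atTop_nhds_zero n a ha
  convert (((hpow 2).const_mul δ).add ((hpow 1).const_mul ε)).add ((hpow 0).const_mul ζ)
    using 1
  · ext x; ring
  · congr 1; ring

lemma eventually_pos_expQuad (ha : 0 < a) {c : ℝ} (hc : 0 < c)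
    (hpoly : ∀ᶠ x in atTop, c ≤ α * x ^ 2 + β * x + γ) :
    ∀ᶠ x in atTop, 0 < expQuad a α β γ δ ε ζ x := by
  filter_upwards [hpoly, (tendsto_exp_neg_mul_mul_quadratic ha δ ε ζ).eventually
    (lt_mem_nhds (neg_lt_zero.2 hc))] with x hx hexp
  simp only [expQuad]
  linarith

lemma tendsto_quadratic_atTop (hα : 0 < α) (β γ : ℝ) :
    Tendsto (fun x : ℝ => α * x ^ 2 + β * x + γ) atTop atTop := by
  have hlin : Tendsto (fun x : ℝ => α * x + β) atTop atTop :=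
    tendsto_atTop_add_const_right _ β (tendsto_id.const_mul_atTop hα)
  convert tendsto_atTop_add_const_right _ γ (tendsto_id.atTop_mul_atTop₀ hlin) using 2 with x
  simp only [id]
  ring

theorem expQuad_roots_Ioi (ha : 0 < a) (hα : 0 < α) (hδ : 0 < δ) (h0 : γ + ζ = 0)
    (h0' : β + ε - a * ζ = 0) (h0'' : 2 * α + 2 * δ - 2 * a * ε + a ^ 2 * ζ = 0) :
    (0 ≤ 3 * a ^ 2 * ε - 6 * a * δ - a ^ 3 * ζ →
      ∀ x, 0 < x → 0 < expQuad a α β γ δ ε ζ x) ∧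
    (3 * a ^ 2 * ε - 6 * a * δ - a ^ 3 * ζ < 0 →
      ∃! x, 0 < x ∧ expQuad a α β γ δ ε ζ x = 0) := by
  set u' := expQuad a 0 (2 * α) β (-a * δ) (2 * δ - a * ε) (ε - a * ζ)
  set u'' := expQuad a 0 0 (2 * α) (a ^ 2 * δ) (a ^ 2 * ε - 4 * a * δ)
    (2 * δ - 2 * a * ε + a ^ 2 * ζ)
  have hu' (x : ℝ) : HasDerivAt u' (u'' x) x :=
    (hasDerivAt_expQuad _ _ _ _ _ _ _ x).congr_deriv (by simp only [u'', expQuad]; ring)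
  have hu'' (x : ℝ) : HasDerivAt u'' (exp (-a * x) * (-a ^ 3 * δ * x ^ 2
      + (6 * a ^ 2 * δ - a ^ 3 * ε) * x + (3 * a ^ 2 * ε - 6 * a * δ - a ^ 3 * ζ))) x :=
    (hasDerivAt_expQuad _ _ _ _ _ _ _ x).congr_deriv (by simp only [expQuad]; ring)
  have hA : -a ^ 3 * δ < 0 := by nlinarith [pow_pos ha 3]
  have hval0 : expQuad a α β γ δ ε ζ 0 = 0 := by simp [expQuad, h0]
  have hval0' : u' 0 = 0 := by simp [u', expQuad]; linarith
  have hval0'' : u'' 0 = 0 := by simp [u'', expQuad]; linarith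
  have hev'' : ∀ᶠ x in atTop, 0 < u'' x :=
    eventually_pos_expQuad ha (mul_pos two_pos hα) (.of_forall fun x => by simp)
  refine ⟨fun hC x hx => pos_of_third_deriv (hasDerivAt_expQuad _ _ _ _ _ _ _) hu' hu''
    (fun x => exp_pos _) hval0 hval0' hval0'' hev'' hA hC hx, fun hC => ?_⟩
  have hev : ∀ᶠ x in atTop, 0 < expQuad a α β γ δ ε ζ x := eventually_pos_expQuad ha one_pos
    ((tendsto_quadratic_atTop hα β γ).eventually_ge_atTop 1)
  have hev' : ∀ᶠ x in atTop, 0 < u' x := eventually_pos_expQuad ha one_pos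
    (((tendsto_atTop_add_const_right _ β (tendsto_id.const_mul_atTop (mul_pos two_pos hα))
      ).eventually_ge_atTop 1).mono fun x hx => by simpa using hx)
  obtain ⟨z, hz, hz0, hcross⟩ := exists_crossesUpAt_of_third_deriv
    (hasDerivAt_expQuad _ _ _ _ _ _ _) hu' hu'' (fun x => exp_pos _) hval0 hval0' hval0''
    hev hev' hev'' hA hC
  exact hcross.existsUnique hz hz0

end ExpQuad

section

variable {k1 k2 : ℝ}

lemma expQuad_eq_exp_mul_h1 (x : ℝ) :
    expQuad (k1 + k2) (k2 * (2 + k2)) (-2 * (1 + k2)) 2 (k1 * (2 - k1)) (2 * (1 - k1)) (-2) x =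
      exp (-(k1 + k2) * x) * h1 k1 k2 x := by
  have hexp : exp (-(k1 + k2) * x) * exp ((k1 + k2) * x) = 1 := by
    rw [← exp_add, neg_mul, neg_add_cancel, exp_zero]
  simp only [expQuad, h1]
  linear_combination (-(k2 * (2 + k2) * x ^ 2 - 2 * (1 + k2) * x + 2)) * hexp

lemma expQuad_eq_h1_neg (x : ℝ) :
    expQuad (k1 + k2) (k1 * (2 - k1)) (-2 * (1 - k1)) (-2) (k2 * (2 + k2)) (2 * (1 + k2)) 2 x =
      h1 k1 k2 (-x) := by
  simp only [expQuad, h1, mul_neg, neg_mul]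
  ring

lemma h1_roots_Ioi (hk1 : 0 < k1) (hk1' : k1 < 2) (hk2 : 0 < k2) :
    (0 ≤ (k1 + k2) * (6 * k2 * (2 + k2) - 6 * (k1 + k2) * (1 + k2) + 2 * (k1 + k2) ^ 2) →
      ∀ x, 0 < x → h1 k1 k2 x ≠ 0) ∧
    ((k1 + k2) * (6 * k2 * (2 + k2) - 6 * (k1 + k2) * (1 + k2) + 2 * (k1 + k2) ^ 2) < 0 →
      ∃! x, 0 < x ∧ h1 k1 k2 x = 0) := by
  obtain ⟨hpos, hroot⟩ := expQuad_roots_Ioi (a := k1 + k2) (α := k2 * (2 + k2))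
    (β := -2 * (1 + k2)) (γ := 2) (δ := k1 * (2 - k1)) (ε := 2 * (1 - k1)) (ζ := -2)
    (by linarith) (mul_pos hk2 (by linarith)) (mul_pos hk1 (by linarith))
    (by ring) (by ring) (by ring)
  refine ⟨fun hT x hx hx0 => (hpos (hT.trans_eq (by ring)) x hx).ne' ?_, fun hT => ?_⟩
  · rw [expQuad_eq_exp_mul_h1, hx0, mul_zero]
  · refine (existsUnique_congr fun x => ?_).1 (hroot (hT.trans_eq' (by ring)))
    rw [expQuad_eq_exp_mul_h1, mul_eq_zero, or_iff_right (exp_ne_zero _)]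

lemma h1_roots_Iio (hk1 : 0 < k1) (hk1' : k1 < 2) (hk2 : 0 < k2) :
    ((k1 + k2) * (6 * k2 * (2 + k2) - 6 * (k1 + k2) * (1 + k2) + 2 * (k1 + k2) ^ 2) ≤ 0 →
      ∀ x, x < 0 → h1 k1 k2 x ≠ 0) ∧
    (0 < (k1 + k2) * (6 * k2 * (2 + k2) - 6 * (k1 + k2) * (1 + k2) + 2 * (k1 + k2) ^ 2) →
      ∃! x, x < 0 ∧ h1 k1 k2 x = 0) := by
  obtain ⟨hpos, hroot⟩ := expQuad_roots_Ioi (a := k1 + k2) (α := k1 * (2 - k1))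
    (β := -2 * (1 - k1)) (γ := -2) (δ := k2 * (2 + k2)) (ε := 2 * (1 + k2)) (ζ := 2)
    (by linarith) (mul_pos hk1 (by linarith)) (mul_pos hk2 (by linarith))
    (by ring) (by ring) (by ring)
  refine ⟨fun hT x hx hx0 => (hpos (by linarith) (-x) (neg_pos.2 hx)).ne' ?_, fun hT => ?_⟩
  · rw [expQuad_eq_h1_neg, neg_neg, hx0]
  · refine ((Equiv.neg ℝ).existsUnique_congr fun x => ?_).1 (hroot (by linarith))
    rw [expQuad_eq_h1_neg, Equiv.neg_apply, neg_lt_zero]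

end

theorem h1_roots (k1 k2 : ℝ) (hk1 : 0 < k1) (hk1' : k1 < 2) (hk2 : 0 < k2) :
    ((k1 + k2) * (6 * k2 * (2 + k2) - 6 * (k1 + k2) * (1 + k2) + 2 * (k1 + k2) ^ 2) > 0 →
      (∃! x : ℝ, x < 0 ∧ h1 k1 k2 x = 0) ∧ ∀ x : ℝ, 0 < x → h1 k1 k2 x ≠ 0) ∧
    ((k1 + k2) * (6 * k2 * (2 + k2) - 6 * (k1 + k2) * (1 + k2) + 2 * (k1 + k2) ^ 2) < 0 →
      (∃! x : ℝ, 0 < x ∧ h1 k1 k2 x = 0) ∧ ∀ x : ℝ, x < 0 → h1 k1 k2 x ≠ 0) ∧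
    ((k1 + k2) * (6 * k2 * (2 + k2) - 6 * (k1 + k2) * (1 + k2) + 2 * (k1 + k2) ^ 2) = 0 →
      ∀ x : ℝ, x ≠ 0 → h1 k1 k2 x ≠ 0) := by
  obtain ⟨hnoPos, hrootPos⟩ := h1_roots_Ioi hk1 hk1' hk2
  obtain ⟨hnoNeg, hrootNeg⟩ := h1_roots_Iio hk1 hk1' hk2
  refine ⟨fun hT => ⟨hrootNeg hT, hnoPos hT.le⟩, fun hT => ⟨hrootPos hT, hnoNeg hT.le⟩,
    fun hT x hx => ?_⟩
  rcases hx.lt_or_gt with hx | hx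
  · exact hnoNeg hT.le x hx
  · exact hnoPos hT.ge x hx
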